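/- If (A,B,H) and (Ã,B̃,H̃) are finite-dimensional P-modules with A, Ã normal and B, B̃ invertible, then in the tensor product P-module ((A⊗Ã)K⁻¹, (B⊗B̃)K⁻¹, H⊗H̃) with K = √(|A|²⊗|Ã|² + |B|²⊗|B̃|²), the first operator (A⊗Ã)K⁻¹ is normal and the second operator (B⊗B̃)K⁻¹ is invertible. -/

import Mathlib

open Matrix Kronecker
open scoped ComplexOrder

/-!
A normal `A` commutes with `AᴴA`, and hence with `BᴴB = 1 - AᴴA`. So `A ⊗ Ã` commutes
with `K² = AᴴA ⊗ ÃᴴÃ + BᴴB ⊗ B̃ᴴB̃`, and therefore with `K`, which is a continuous function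
of `K²` (its square root). Since `B ⊗ B̃` is invertible, `K²` is a positive semidefinite
matrix plus a positive definite one, so `K` is invertible. Then `(A ⊗ Ã)K⁻¹` is the product
of a normal matrix and a commuting self-adjoint one, hence normal, and `(B ⊗ B̃)K⁻¹` is a
product of units.
-/

section StarRing

variable {R : Type*}

theorem IsStarNormal.commute_star_mul_self_left [Semiring R] [StarMul R] {a : R}
    [IsStarNormal a] : Commute (star a * a) a :=
  (star_comm_self (x := a)).mul_left (Commute.refl a)

theorem IsStarNormal.commute_star_mul_self_of_add_eq_one [Ring R] [StarMul R] {a b : R}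
    [IsStarNormal a] (h : star a * a + star b * b = 1) : Commute (star b * b) a := by
  rw [eq_sub_of_add_eq' h]
  exact (Commute.one_left a).sub_left IsStarNormal.commute_star_mul_self_left

theorem IsStarNormal.mul_isSelfAdjoint [Semiring R] [StarMul R] {a b : R} [IsStarNormal a]
    (hb : IsSelfAdjoint b) (hab : Commute a b) (hab' : Commute (star a) b) :
    IsStarNormal (a * b) := by
  refine ⟨?_⟩
  rw [star_mul, hb.star_eq]
  exact (hab.symm.mul_right (Commute.refl b)).mul_left
    ((star_comm_self (x := a)).mul_right hab')

end StarRing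

section Matrix

variable {ι κ : Type*} [Fintype ι] [Fintype κ]

theorem Commute.kronecker {R : Type*} [CommSemiring R] {a a' : Matrix ι ι R}
    {b b' : Matrix κ κ R} (ha : Commute a a') (hb : Commute b b') :
    Commute (a ⊗ₖ b) (a' ⊗ₖ b') := by
  simp only [Commute, SemiconjBy, ← mul_kronecker_mul, ha.eq, hb.eq]

theorem Commute.nonsing_inv_left [DecidableEq ι] {R : Type*} [CommRing R]
    {a b : Matrix ι ι R} (h : Commute a b) : Commute a⁻¹ b := by
  by_cases ha : IsUnit a
  · obtain ⟨u, rfl⟩ := ha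
    rw [← coe_units_inv]
    exact h.units_inv_left
  · rw [nonsing_inv_eq_ringInverse, Ring.inverse_non_unit _ ha]
    exact Commute.zero_left b

theorem Matrix.isStarNormal_kronecker {R : Type*} [CommSemiring R] [StarRing R]
    {a : Matrix ι ι R} {b : Matrix κ κ R} [IsStarNormal a] [IsStarNormal b] :
    IsStarNormal (a ⊗ₖ b) := by
  refine ⟨?_⟩
  rw [star_eq_conjTranspose, conjTranspose_kronecker]
  exact (star_comm_self (x := a)).kronecker (star_comm_self (x := b))

variable {𝕜 : Type*} [RCLike 𝕜]

open scoped MatrixOrder in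
theorem Matrix.PosSemidef.commute_of_commute_mul_self [DecidableEq ι] {K X : Matrix ι ι 𝕜}
    (hK : K.PosSemidef) (h : Commute (K * K) X) : Commute K X := by
  rw [← CFC.sqrt_mul_self K hK.nonneg, CFC.sqrt_eq_cfc]
  exact h.cfc_nnreal _

end Matrix

/-- If `(A,B)` and `(Ã,B̃)` are finite-dimensional P-modules with `A, Ã` normal
and `B, B̃` invertible, then in the tensor product P-module
`((A ⊗ Ã)K⁻¹, (B ⊗ B̃)K⁻¹)` with `K = √(|A|² ⊗ |Ã|² + |B|² ⊗ |B̃|²)`,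
the operator `(A ⊗ Ã)K⁻¹` is normal and `(B ⊗ B̃)K⁻¹` is invertible. -/
theorem stmt_15 {m n : ℕ} (A B : Matrix (Fin m) (Fin m) ℂ)
    (At Bt : Matrix (Fin n) (Fin n) ℂ)
    (hm : Aᴴ * A + Bᴴ * B = 1) (hmt : Atᴴ * At + Btᴴ * Bt = 1)
    (hA : Aᴴ * A = A * Aᴴ) (hAt : Atᴴ * At = At * Atᴴ)
    (hB : IsUnit B) (hBt : IsUnit Bt)
    (K : Matrix (Fin m × Fin n) (Fin m × Fin n) ℂ)
    (hK1 : K.PosSemidef)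
    (hK2 : K * K = (Aᴴ * A) ⊗ₖ (Atᴴ * At) + (Bᴴ * B) ⊗ₖ (Btᴴ * Bt)) :
    (((A ⊗ₖ At) * K⁻¹)ᴴ * ((A ⊗ₖ At) * K⁻¹)
        = ((A ⊗ₖ At) * K⁻¹) * ((A ⊗ₖ At) * K⁻¹)ᴴ) ∧
    IsUnit ((B ⊗ₖ Bt) * K⁻¹) := by
  have : IsStarNormal A := ⟨hA⟩
  have : IsStarNormal At := ⟨hAt⟩
  have hKX : Commute K (A ⊗ₖ At) := hK1.commute_of_commute_mul_self <| by
    rw [hK2]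
    exact (IsStarNormal.commute_star_mul_self_left.kronecker
      IsStarNormal.commute_star_mul_self_left).add_left
      ((IsStarNormal.commute_star_mul_self_of_add_eq_one hm).kronecker
        (IsStarNormal.commute_star_mul_self_of_add_eq_one hmt))
  have hKXH : Commute K (A ⊗ₖ At)ᴴ := by
    simpa only [star_eq_conjTranspose, hK1.1.eq] using hKX.star_star
  have hKK : (K * K).PosDef := by
    rw [hK2]
    exact PosDef.posSemidef_add
      ((posSemidef_conjTranspose_mul_self A).kronecker (posSemidef_conjTranspose_mul_self At))
      ((PosDef.conjTranspose_mul_self B (mulVec_injective_iff_isUnit.mpr hB)).kronecker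
        (PosDef.conjTranspose_mul_self Bt (mulVec_injective_iff_isUnit.mpr hBt)))
  have hK : IsUnit K := ((Commute.refl K).isUnit_mul_iff.mp hKK.isUnit).1
  have : IsStarNormal (A ⊗ₖ At) := isStarNormal_kronecker
  exact ⟨(IsStarNormal.mul_isSelfAdjoint hK1.1.inv hKX.nonsing_inv_left.symm
      hKXH.nonsing_inv_left.symm).star_comm_self,
    (hB.kronecker hBt).mul (isUnit_nonsing_inv_iff.mpr hK)⟩
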